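/- arXiv:1510.05360 — 3 statements merged into one kernel-verified Lean document; each statement's English description precedes it below -/
import Mathlib

section
/- If G is a finite simple graph that is not complete (i.e., G has two distinct non-adjacent vertices) and k ≥ 2 is a natural number, then the girth of the k-independent graph I_k(G) equals 4. -/
/-- A finset of vertices is independent if no two of its members are adjacent. -/
def IsIndep {V : Type*} (G : SimpleGraph V) (s : Finset V) : Prop :=
  ∀ u ∈ s, ∀ v ∈ s, ¬ G.Adj u v

/-- The `k`-independent graph of `G`: vertices are the independent sets of cardinality at most
`k`, two of them adjacent iff one is obtained from the other by adding a single vertex. -/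
def indepGraph {V : Type*} (G : SimpleGraph V) (k : ℕ) :
    SimpleGraph {s : Finset V // IsIndep G s ∧ s.card ≤ k} where
  Adj A B := (A.1 ⊆ B.1 ∧ B.1.card = A.1.card + 1) ∨ (B.1 ⊆ A.1 ∧ A.1.card = B.1.card + 1)
  symm := by
    constructor
    rintro A B (⟨h1, h2⟩ | ⟨h1, h2⟩)
    · exact Or.inr ⟨h1, h2⟩
    · exact Or.inl ⟨h1, h2⟩
  loopless := by
    constructor
    rintro A (⟨_, h⟩ | ⟨_, h⟩) <;> omega

/-! Adjacent vertices of `I_k(G)` have cardinalities of different parity, so `I_k(G)` is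
bipartite and all its cycles have even length, hence length at least 4. Two distinct
non-adjacent vertices `u, v` give the 4-cycle `∅, {u}, {u, v}, {v}`, which needs `k ≥ 2`. -/

namespace SimpleGraph

variable {α : Type*} {G : SimpleGraph α}

lemma four_le_egirth_of_colorable_two (hG : G.Colorable 2) : 4 ≤ G.egirth := by
  refine le_egirth.mpr fun a w hw ↦ ?_
  obtain ⟨m, hm⟩ := two_colorable_iff_forall_loop_even.mp hG a w
  have := hw.three_le_length
  exact_mod_cast (by omega : 4 ≤ w.length)

lemma egirth_le_four {a b c d : α} (hab : G.Adj a b) (hbc : G.Adj b c) (hcd : G.Adj c d)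
    (hda : G.Adj d a) (hac : a ≠ c) (hbd : b ≠ d) : G.egirth ≤ 4 := by
  let w : G.Walk a a := .cons hab (.cons hbc (.cons hcd (.cons hda .nil)))
  have hw : w.IsCycle := by
    simp [w, Walk.cons_isCycle_iff, hab.ne, hbc.ne, hcd.ne, hda.ne, hab.ne.symm, hda.ne.symm, hac,
      hac.symm, hbd]
  exact egirth_le_length hw

end SimpleGraph

open SimpleGraph Finset

section

variable {V : Type*} {G : SimpleGraph V}

lemma IsIndep.subset {s t : Finset V} (ht : IsIndep G t) (hst : s ⊆ t) : IsIndep G s :=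
  fun u hu v hv ↦ ht u (hst hu) v (hst hv)

lemma isIndep_pair [DecidableEq V] {u v : V} (h : ¬ G.Adj u v) : IsIndep G {u, v} := by
  simp only [IsIndep, mem_insert, mem_singleton]
  rintro a (rfl | rfl) b (rfl | rfl)
  exacts [G.irrefl, h, fun h' ↦ h h'.symm, G.irrefl]

lemma indepGraph_colorable_two (k : ℕ) : (indepGraph G k).Colorable 2 :=
  ⟨Coloring.mk (fun A ↦ ⟨#A.1 % 2, Nat.mod_lt _ two_pos⟩) fun {A B} hAB ↦ by
    rcases hAB with ⟨-, h⟩ | ⟨-, h⟩ <;> simp only [ne_eq, Fin.ext_iff] <;> omega⟩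

lemma indepGraph_egirth_le_four {k : ℕ} (hk : 2 ≤ k) {u v : V} (huv : u ≠ v)
    (h : ¬ G.Adj u v) : (indepGraph G k).egirth ≤ 4 := by
  classical
  have hI := isIndep_pair h
  have hcard : #{u, v} ≤ k := (card_pair huv).le.trans hk
  let subsetOfPair (s : Finset V) (hs : s ⊆ {u, v}) : {s : Finset V // IsIndep G s ∧ #s ≤ k} :=
    ⟨s, hI.subset hs, (card_le_card hs).trans hcard⟩
  refine egirth_le_four (a := subsetOfPair ∅ (empty_subset _)) (b := subsetOfPair {u} (by simp))
    (c := subsetOfPair {u, v} subset_rfl) (d := subsetOfPair {v} (by simp)) ?_ ?_ ?_ ?_ ?_ ?_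
  all_goals simp [indepGraph, subsetOfPair, card_pair huv, huv, (insert_ne_empty u {v}).symm]

end

theorem indepGraph_girth_general {V : Type*} (G : SimpleGraph V) (k : ℕ) (hk : 2 ≤ k)
    (h : ∃ u v : V, u ≠ v ∧ ¬ G.Adj u v) :
    (indepGraph G k).girth = 4 := by
  obtain ⟨u, v, huv, hnadj⟩ := h
  have : (indepGraph G k).egirth = 4 :=
    (indepGraph_egirth_le_four hk huv hnadj).antisymm
      (four_le_egirth_of_colorable_two (indepGraph_colorable_two k))
  rw [girth, this]
  rfl

theorem indepGraph_girth {V : Type*} [Fintype V] (G : SimpleGraph V) (k : ℕ) (hk : 2 ≤ k)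
    (h : ∃ u v : V, u ≠ v ∧ ¬ G.Adj u v) :
    (indepGraph G k).girth = 4 :=
  indepGraph_girth_general G k hk h
end

section
/- For every integer n ≥ 1, the n-independent graph I_n(K_{1,n}) of the star K_{1,n} is not Hamiltonian, i.e., it contains no Hamiltonian cycle. -/
noncomputable instance {V : Type*} [Fintype V] (G : SimpleGraph V) (k : ℕ) :
    Fintype {s : Finset V // IsIndep G s ∧ s.card ≤ k} :=
  Fintype.ofFinite _

namespace SimpleGraph

variable {α : Type*} [Fintype α] [DecidableEq α] {G : SimpleGraph α}

lemma IsHamiltonian.neighborSet_nontrivial [Nontrivial α] (hG : G.IsHamiltonian) (v : α) :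
    (G.neighborSet v).Nontrivial := by
  obtain ⟨p, hp⟩ := hG.exists_isHamiltonianCycle v
  have hnil : ¬ p.Nil := hp.isCycle.not_nil
  exact ⟨p.snd, Walk.adj_snd hnil, p.penultimate, (Walk.adj_penultimate hnil).symm,
    hp.isCycle.snd_ne_penultimate⟩

end SimpleGraph

section IndepGraph

variable {V : Type*} {G : SimpleGraph V}

lemma isIndep_empty : IsIndep G ∅ := by
  simp [IsIndep]

lemma isIndep_singleton (v : V) : IsIndep G {v} := by
  simp [IsIndep]

lemma val_eq_empty_of_indepGraph_adj_dominating {k : ℕ} {c : V} (hc : ∀ x, x ≠ c → G.Adj c x)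
    {A B : {s : Finset V // IsIndep G s ∧ s.card ≤ k}} (hA : A.1 = {c})
    (hAB : (indepGraph G k).Adj A B) : B.1 = ∅ := by
  rcases hAB with ⟨hsub, hcard⟩ | ⟨-, hcard⟩
  · have hcB : c ∈ B.1 := hsub (by simp [hA])
    obtain ⟨x, hxB, hxc⟩ := Finset.exists_mem_ne (by rw [hcard, hA]; simp) c
    exact absurd (hc x hxc) (B.2.1 c hcB x hxB)
  · simpa [hA] using hcard

end IndepGraph

lemma completeBipartiteGraph_adj_inl {β : Type*} (x : Fin 1 ⊕ β) (hx : x ≠ Sum.inl 0) :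
    (completeBipartiteGraph (Fin 1) β).Adj (Sum.inl 0) x := by
  rcases x with a | b
  · exact absurd (by rw [Subsingleton.elim a 0]) hx
  · simp

theorem indepGraph_star_not_hamiltonian (n : ℕ) (hn : 1 ≤ n) :
    ¬ (indepGraph (completeBipartiteGraph (Fin 1) (Fin n)) n).IsHamiltonian := by
  intro hham
  set G := completeBipartiteGraph (Fin 1) (Fin n)
  let center : {s : Finset (Fin 1 ⊕ Fin n) // IsIndep G s ∧ s.card ≤ n} :=
    ⟨{Sum.inl 0}, isIndep_singleton _, by simpa using hn⟩
  let empty : {s : Finset (Fin 1 ⊕ Fin n) // IsIndep G s ∧ s.card ≤ n} :=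
    ⟨∅, isIndep_empty, by simp⟩
  have : Nontrivial {s : Finset (Fin 1 ⊕ Fin n) // IsIndep G s ∧ s.card ≤ n} :=
    ⟨⟨center, empty, by simp [center, empty]⟩⟩
  obtain ⟨B, hB, B', hB', hne⟩ := hham.neighborSet_nontrivial center
  have hval : ∀ {B}, (indepGraph G n).Adj center B → B.1 = ∅ :=
    val_eq_empty_of_indepGraph_adj_dominating completeBipartiteGraph_adj_inl rfl
  exact hne (Subtype.ext ((hval hB).trans (hval hB').symm))
end

section
/- For every integer n ≥ 3, the graph I_{⌊n/2⌋}(C_n), where ⌊n/2⌋ is the independence number of the cycle C_n on n vertices, is not Hamiltonian. -/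
open Finset SimpleGraph

section SignedIndepCount

variable {V : Type*}

theorem isIndep_insert {G : SimpleGraph V} [DecidableEq V] {v : V} {t : Finset V} :
    IsIndep G (insert v t) ↔ IsIndep G t ∧ ∀ w ∈ t, ¬G.Adj v w := by
  simp only [IsIndep, mem_insert, forall_eq_or_imp, G.loopless.irrefl v, not_false_eq_true,
    true_and]
  exact ⟨fun h => ⟨fun u hu => (h.2 u hu).2, h.1⟩,
    fun h => ⟨h.2, fun u hu => ⟨fun hadj => h.2 u hu hadj.symm, h.1 u hu⟩⟩⟩

open scoped Classical in
/-- The value at `-1` of the independence polynomial of the subgraph of `G` induced on `U`. -/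
noncomputable def signedIndepCount (G : SimpleGraph V) (U : Finset V) : ℤ :=
  ∑ s ∈ U.powerset with IsIndep G s, (-1) ^ s.card

theorem signedIndepCount_empty (G : SimpleGraph V) : signedIndepCount G ∅ = 1 := by
  rw [signedIndepCount, powerset_empty, sum_filter, sum_singleton, card_empty, pow_zero]
  exact if_pos fun u hu => absurd hu (notMem_empty u)

theorem signedIndepCount_eq_sub [DecidableEq V] (G : SimpleGraph V) [DecidableRel G.Adj]
    {U : Finset V} {v : V} (hv : v ∈ U) :
    signedIndepCount G U =
      signedIndepCount G (U.erase v) - signedIndepCount G {w ∈ U.erase v | ¬G.Adj v w} := by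
  classical
  set W := {w ∈ U.erase v | ¬G.Adj v w}
  simp only [signedIndepCount, sum_filter]
  rw [← insert_erase hv, sum_powerset_insert (notMem_erase v U), erase_insert (notMem_erase v U),
    sub_eq_add_neg, ← sum_neg_distrib]
  congr 1
  have hW : W ⊆ U.erase v := filter_subset _ _
  calc ∑ t ∈ (U.erase v).powerset,
          (if IsIndep G (insert v t) then (-1 : ℤ) ^ #(insert v t) else 0)
      _ = ∑ t ∈ W.powerset,
          (if IsIndep G (insert v t) then (-1 : ℤ) ^ #(insert v t) else 0) := by
        refine (sum_subset (powerset_mono.2 hW) fun t ht htW => ?_).symm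
        obtain ⟨w, hwt, hwW⟩ := not_subset.1 (mt mem_powerset.2 htW)
        have hadj : G.Adj v w := by
          by_contra h
          exact hwW (mem_filter.2 ⟨mem_powerset.1 ht hwt, h⟩)
        rw [if_neg fun h => (isIndep_insert.1 h).2 w hwt hadj]
      _ = ∑ t ∈ W.powerset, -if IsIndep G t then (-1 : ℤ) ^ #t else 0 := by
        refine sum_congr rfl fun t ht => ?_
        have htW := mem_powerset.1 ht
        have hvt : v ∉ t := fun h => by simpa using hW (htW h)
        have hnadj : ∀ w ∈ t, ¬G.Adj v w := fun w hw => (mem_filter.1 (htW hw)).2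
        rw [isIndep_insert, and_iff_left hnadj, card_insert_of_notMem hvt, pow_succ]
        split_ifs <;> ring

theorem signedIndepCount_singleton (G : SimpleGraph V) (v : V) : signedIndepCount G {v} = 0 := by
  classical
  rw [signedIndepCount_eq_sub G (mem_singleton_self v), erase_singleton, filter_empty, sub_self]

end SignedIndepCount

namespace SimpleGraph.Walk

variable {V : Type*} {G : SimpleGraph V} {a : V} {f : V → ℤ}

theorem sum_map_support_tail_eq_zero (hf : ∀ u v, G.Adj u v → f v = -f u) (p : G.Walk a a) :
    (p.support.tail.map f).sum = 0 := by
  have hrotate : (p.support.dropLast.map f).sum = (p.support.tail.map f).sum := by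
    have h := congrArg (fun l => (l.map f).sum)
      (p.cons_tail_support.trans p.dropLast_support_concat.symm)
    simp only [List.map_cons, List.sum_cons, List.map_append, List.sum_append, List.map_nil,
      List.sum_nil] at h
    omega
  have hdarts : (p.support.tail.map f).sum + (p.support.dropLast.map f).sum = 0 := by
    rw [← map_snd_darts, ← map_fst_darts, List.map_map, List.map_map, ← List.sum_map_add]
    exact List.sum_eq_zero fun x hx => by
      obtain ⟨d, -, rfl⟩ := List.mem_map.1 hx
      simp [hf _ _ d.adj]
  omega

theorem IsHamiltonianCycle.sum_eq_zero [Fintype V] [DecidableEq V]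
    (hf : ∀ u v, G.Adj u v → f v = -f u) {p : G.Walk a a} (hp : p.IsHamiltonianCycle) :
    ∑ v, f v = 0 := by
  rw [← hp.isHamiltonian_tail.toFinset_support, support_tail_of_not_nil p hp.not_nil,
    List.sum_toFinset f hp.isCycle.support_nodup]
  exact p.sum_map_support_tail_eq_zero hf

end SimpleGraph.Walk

section IndepGraph

variable {V : Type*} [Fintype V] {G : SimpleGraph V} {k : ℕ}

theorem sum_indepGraph_neg_one_pow_card (hα : ∀ s, IsIndep G s → #s ≤ k) :
    ∑ A : {s : Finset V // IsIndep G s ∧ #s ≤ k}, (-1 : ℤ) ^ #A.1 =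
      signedIndepCount G univ := by
  rw [signedIndepCount, powerset_univ]
  refine (sum_subtype _ (fun s => ?_) fun s : Finset V => (-1 : ℤ) ^ #s).symm
  simpa using hα s

theorem not_isHamiltonian_indepGraph [DecidableEq V] [Nonempty V] (hk : 1 ≤ k)
    (hα : ∀ s, IsIndep G s → #s ≤ k) (h : signedIndepCount G univ ≠ 0) :
    ¬(indepGraph G k).IsHamiltonian := by
  intro hG
  obtain ⟨v⟩ := ‹Nonempty V›
  have : Nontrivial {s : Finset V // IsIndep G s ∧ #s ≤ k} :=
    ⟨⟨∅, fun u hu => absurd hu (notMem_empty u), by simp⟩,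
      ⟨{v}, by simp [IsIndep], by simpa using hk⟩, by simp⟩
  obtain ⟨_, p, hp⟩ := hG Fintype.one_lt_card.ne'
  refine h ((sum_indepGraph_neg_one_pow_card hα).symm.trans (hp.sum_eq_zero ?_))
  rintro A B (⟨-, hcard⟩ | ⟨-, hcard⟩) <;> rw [hcard, pow_succ] <;> ring

end IndepGraph

theorem cycleGraph_adj_iff_val {n : ℕ} {u v : Fin (n + 2)} :
    (cycleGraph (n + 2)).Adj u v ↔ v.val = u.val + 1 ∨ u.val = v.val + 1 ∨
      (u.val = n + 1 ∧ v.val = 0) ∨ (v.val = n + 1 ∧ u.val = 0) := by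
  rw [cycleGraph_adj, sub_eq_iff_eq_add', sub_eq_iff_eq_add', Fin.ext_iff, Fin.ext_iff,
    Fin.val_add_one, Fin.val_add_one]
  split_ifs with hu hv hv <;> simp only [Fin.ext_iff, Fin.val_last] at hu hv <;> omega

theorem IsIndep.two_mul_card_le_cycleGraph {n : ℕ} {s : Finset (Fin (n + 2))}
    (hs : IsIndep (cycleGraph (n + 2)) s) : 2 * #s ≤ n + 2 := by
  have hdisj : Disjoint s (s.image (· + 1)) := by
    refine disjoint_left.2 fun v hv hv' => ?_
    obtain ⟨u, hu, rfl⟩ := mem_image.1 hv'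
    exact hs u hu _ hv (cycleGraph_adj.2 (Or.inr (add_sub_cancel_left u 1)))
  calc 2 * #s = #(s ∪ s.image (· + 1)) := by
        rw [card_union_of_disjoint hdisj, card_image_of_injective _ (add_left_injective 1)]
        ring
    _ ≤ n + 2 := card_le_univ _ |>.trans_eq (Fintype.card_fin _)

def cycleArc (n a b : ℕ) : Finset (Fin n) := {v | a ≤ v.val ∧ v.val < b}

/-- The value at `-1` of the independence polynomial of the path on `m` vertices, see
`signedIndepCount_cycleArc`. -/
def pathSignedIndepCount : ℕ → ℤ
  | 0 => 1
  | 1 => 0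
  | m + 2 => pathSignedIndepCount (m + 1) - pathSignedIndepCount m

theorem pathSignedIndepCount_add_three (m : ℕ) :
    pathSignedIndepCount (m + 3) = -pathSignedIndepCount m := by
  simp only [pathSignedIndepCount]
  ring

theorem pathSignedIndepCount_add_two_sub_ne_zero :
    ∀ m, pathSignedIndepCount (m + 2) - pathSignedIndepCount m ≠ 0
  | 0 | 1 | 2 => by decide
  | m + 3 => by
    rw [pathSignedIndepCount_add_three, pathSignedIndepCount_add_three]
    have := pathSignedIndepCount_add_two_sub_ne_zero m
    omega

theorem signedIndepCount_cycleArc_add_two {n a b : ℕ} (hab : a ≤ b + 1) (h : b + 2 < n) :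
    signedIndepCount (cycleGraph n) (cycleArc n a (b + 2)) =
      signedIndepCount (cycleGraph n) (cycleArc n a (b + 1)) -
        signedIndepCount (cycleGraph n) (cycleArc n a b) := by
  obtain ⟨n, rfl⟩ : ∃ k, n = k + 2 := ⟨n - 2, by omega⟩
  have hmem : (⟨b + 1, by omega⟩ : Fin (n + 2)) ∈ cycleArc (n + 2) a (b + 2) := by
    simp [cycleArc, hab]
  rw [signedIndepCount_eq_sub _ hmem]
  congr 2 <;> ext v <;>
    simp only [cycleArc, mem_filter, mem_erase, mem_univ, true_and, ne_eq, Fin.ext_iff,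
      cycleGraph_adj_iff_val] <;> omega

theorem signedIndepCount_cycleArc {n a : ℕ} :
    ∀ {m}, a + m < n →
      signedIndepCount (cycleGraph n) (cycleArc n a (a + m)) = pathSignedIndepCount m
  | 0, _ => by
    rw [pathSignedIndepCount, ← signedIndepCount_empty (cycleGraph n)]
    congr
    ext v
    simp [cycleArc]
  | 1, h => by
    rw [pathSignedIndepCount, ← signedIndepCount_singleton (cycleGraph n) ⟨a, by omega⟩]
    congr
    ext v
    simp [cycleArc, Fin.ext_iff]
    omega
  | m + 2, h => by
    rw [show a + (m + 2) = a + m + 2 from rfl,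
      signedIndepCount_cycleArc_add_two (by omega) (by omega), pathSignedIndepCount,
      ← signedIndepCount_cycleArc (n := n) (a := a) (m := m + 1) (by omega),
      ← signedIndepCount_cycleArc (n := n) (a := a) (m := m) (by omega)]
    rfl

theorem signedIndepCount_cycleGraph (m : ℕ) :
    signedIndepCount (cycleGraph (m + 3)) univ =
      pathSignedIndepCount (m + 2) - pathSignedIndepCount m := by
  rw [signedIndepCount_eq_sub _ (mem_univ (Fin.last (m + 2))),
    ← signedIndepCount_cycleArc (n := m + 3) (a := 0) (m := m + 2) (by omega),
    ← signedIndepCount_cycleArc (n := m + 3) (a := 1) (m := m) (by omega)]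
  congr 2 <;> ext v <;> have := v.isLt <;>
    simp only [cycleArc, mem_filter, mem_erase, mem_univ, true_and, ne_eq, Fin.ext_iff,
      and_true, Fin.val_last, cycleGraph_adj_iff_val] <;> omega

theorem indepGraph_cycle_not_hamiltonian (n : ℕ) (hn : 3 ≤ n) :
    ¬ (indepGraph (SimpleGraph.cycleGraph n) (n / 2)).IsHamiltonian := by
  obtain ⟨m, rfl⟩ : ∃ m, n = m + 3 := ⟨n - 3, by omega⟩
  refine not_isHamiltonian_indepGraph (by omega) (fun s hs => ?_) ?_
  · have := hs.two_mul_card_le_cycleGraph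
    omega
  · rw [signedIndepCount_cycleGraph]
    exact pathSignedIndepCount_add_two_sub_ne_zero m
end
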